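/- Let U ⊆ ℂ be open, let f: U → ℂ be twice continuously (real-)differentiable, let θ: U → ℝ be continuously (real-)differentiable, and set ν = e^{iθ}. Suppose z ∈ U satisfies Dθ(z)[ν(z)] = 0 (vanishing normal derivative of θ at z), and let κ(z) = Dθ(z)[iν(z)]. Then 4·∂(∂̄f)(z) = ∂_n(∂_n f)(z) + ∂_s(∂_s f)(z) + κ(z)·∂_n f(z); that is, the normalized Laplacian Δ = ∂∂̄ satisfies 4Δ = ∂_s² + ∂_n² + κ·∂_n at z. -/

import Mathlib

/-! Both `∂_n` and `∂_s` are directional derivatives: `∂_n g = Dg[ν]` and `∂_s g = Dg[iν]`.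
Differentiating `w ↦ Df(w)[V(w)]` along `V ∈ {ν, iν}` gives `D²f[V, V] + Df[DV[V]]`, and
`Dν = iν·Dθ`. Hence `∂_n θ = 0` kills the correction term of `∂_n²`, while that of `∂_s²` is
`Df[i·iν·κ] = −κ·∂_n f`. What remains, `D²f[ν, ν] + D²f[iν, iν]`, is the trace of the symmetric
Hessian in the orthonormal frame `(ν, iν)`, which equals `D²f[1, 1] + D²f[i, i] = 4∂∂̄f`. -/

open Complex

/-- The Wirtinger derivative `∂g(z) = (1/2)(Dg(z)[1] − i·Dg(z)[i])`. -/
noncomputable def wirtingerD (g : ℂ → ℂ) (z : ℂ) : ℂ :=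
  (fderiv ℝ g z 1 - Complex.I * fderiv ℝ g z Complex.I) / 2

/-- The conjugate Wirtinger derivative `∂̄g(z) = (1/2)(Dg(z)[1] + i·Dg(z)[i])`. -/
noncomputable def wirtingerDBar (g : ℂ → ℂ) (z : ℂ) : ℂ :=
  (fderiv ℝ g z 1 + Complex.I * fderiv ℝ g z Complex.I) / 2

/-- The "normal" derivative `∂_n g = ν·∂g + ν̄·∂̄g` with respect to a unimodular field `ν`. -/
noncomputable def dN (ν : ℂ → ℂ) (g : ℂ → ℂ) (z : ℂ) : ℂ :=
  ν z * wirtingerD g z + (starRingEnd ℂ) (ν z) * wirtingerDBar g z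

/-- The "tangential" derivative `∂_s g = iν·∂g − iν̄·∂̄g` with respect to a unimodular field `ν`. -/
noncomputable def dS (ν : ℂ → ℂ) (g : ℂ → ℂ) (z : ℂ) : ℂ :=
  Complex.I * ν z * wirtingerD g z - Complex.I * (starRingEnd ℂ) (ν z) * wirtingerDBar g z

open ComplexConjugate

theorem clm_apply_eq_wirtinger (L : ℂ →L[ℝ] ℂ) (v : ℂ) :
    L v = v * ((L 1 - I * L I) / 2) + conj v * ((L 1 + I * L I) / 2) := by
  have hv : v = v.re • (1 : ℂ) + v.im • I := by simp [real_smul, re_add_im]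
  conv_lhs => rw [hv]
  conv_rhs => rw [← re_add_im v]
  rw [map_add, map_smul, map_smul, real_smul, real_smul, map_add, map_mul, conj_ofReal,
    conj_ofReal, conj_I]
  linear_combination (v.im * L I) * I_sq

theorem dN_eq_fderiv (ν g : ℂ → ℂ) : dN ν g = fun w => fderiv ℝ g w (ν w) := by
  ext w
  rw [clm_apply_eq_wirtinger, dN, wirtingerD, wirtingerDBar]

theorem dS_eq_fderiv (ν g : ℂ → ℂ) : dS ν g = fun w => fderiv ℝ g w (I * ν w) := by
  ext w
  rw [clm_apply_eq_wirtinger, dS, wirtingerD, wirtingerDBar, map_mul, conj_I]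
  ring

theorem fderiv_fderiv_apply_along {E F : Type*} [NormedAddCommGroup E] [NormedSpace ℝ E]
    [NormedAddCommGroup F] [NormedSpace ℝ F] {f : E → F} {V : E → E} {V' : E →L[ℝ] E} {z : E}
    (hf : DifferentiableAt ℝ (fderiv ℝ f) z) (hV : HasFDerivAt V V' z) (u : E) :
    fderiv ℝ (fun w => fderiv ℝ f w (V w)) z u
      = fderiv ℝ (fderiv ℝ f) z u (V z) + fderiv ℝ f z (V' u) := by
  rw [(hf.hasFDerivAt.clm_apply hV).fderiv]
  simp [add_comm]

theorem four_mul_wirtingerD_wirtingerDBar {f : ℂ → ℂ} {z : ℂ}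
    (hf : DifferentiableAt ℝ (fderiv ℝ f) z) (hsymm : IsSymmSndFDerivAt ℝ f z) :
    4 * wirtingerD (wirtingerDBar f) z
      = fderiv ℝ (fderiv ℝ f) z 1 1 + fderiv ℝ (fderiv ℝ f) z I I := by
  have h1 := hf.hasFDerivAt.clm_apply (hasFDerivAt_const (1 : ℂ) z)
  have hI := hf.hasFDerivAt.clm_apply (hasFDerivAt_const I z)
  have hDBar : HasFDerivAt (wirtingerDBar f) _ z := (h1.add (hI.const_mul I)).mul_const (2 : ℂ)⁻¹
  rw [wirtingerD, hDBar.fderiv]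
  simp only [ContinuousLinearMap.comp_zero, zero_add, smul_add, add_apply, smul_apply,
    ContinuousLinearMap.flip_apply, smul_eq_mul, hsymm I 1]
  linear_combination (-fderiv ℝ (fderiv ℝ f) z I I) * I_sq

theorem apply_add_apply_I_mul_of_norm_eq_one {E : Type*} [NormedAddCommGroup E]
    [NormedSpace ℝ E] (B : ℂ →L[ℝ] ℂ →L[ℝ] E) (hB : B 1 I = B I 1) {v : ℂ} (hv : ‖v‖ = 1) :
    B v v + B (I * v) (I * v) = B 1 1 + B I I := by
  have hv1 : v.re ^ 2 + v.im ^ 2 = 1 := by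
    have h := normSq_eq_norm_sq v
    rw [hv, normSq_apply] at h
    linear_combination h
  have hdecomp : v = v.re • (1 : ℂ) + v.im • I := by simp [real_smul, re_add_im]
  have hIv : I * v = (-v.im) • (1 : ℂ) + v.re • I := by
    apply Complex.ext <;> simp
  generalize v.re = a, v.im = b at hdecomp hIv hv1
  rw [hIv, hdecomp]
  simp only [map_add, map_smul, add_apply, smul_apply, hB]
  linear_combination (norm := module) hv1 • (B 1 1 + B I I)

theorem hasFDerivAt_cexp_I_mul_ofReal {E : Type*} [NormedAddCommGroup E] [NormedSpace ℝ E]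
    {θ : E → ℝ} {θ' : E →L[ℝ] ℝ} {z : E} (hθ : HasFDerivAt θ θ' z) :
    HasFDerivAt (fun w => exp (I * θ w)) ((I * exp (I * θ z)) • ofRealCLM.comp θ') z :=
  ((ofRealCLM.hasFDerivAt.comp z hθ).const_mul I).cexp.congr_fderiv <| by
    ext u
    simp only [Function.comp_apply, ofRealCLM_apply, smul_apply, ContinuousLinearMap.comp_apply,
      smul_eq_mul]
    ring

/-- With `ν = e^{iθ}` and `∂_n θ(z) = 0`, the normalized Laplacian `Δ = ∂∂̄` satisfies
`4Δf = ∂_s² f + ∂_n² f + κ·∂_n f` at `z`, where `κ(z) = ∂_s θ(z)`. -/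
theorem laplacian_curvilinear (U : Set ℂ) (hU : IsOpen U) (f : ℂ → ℂ) (θ : ℂ → ℝ)
    (hf : ContDiffOn ℝ 2 f U) (hθ : ContDiffOn ℝ 1 θ U) (ν : ℂ → ℂ)
    (hνdef : ∀ w, ν w = Complex.exp (Complex.I * (θ w : ℂ)))
    (z : ℂ) (hz : z ∈ U)
    (hn : fderiv ℝ θ z (ν z) = 0) :
    4 * wirtingerD (wirtingerDBar f) z
      = dN ν (dN ν f) z + dS ν (dS ν f) z
        + ((fderiv ℝ θ z (Complex.I * ν z) : ℝ) : ℂ) * dN ν f z := by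
  have hf2 : ContDiffAt ℝ 2 f z := hf.contDiffAt (hU.mem_nhds hz)
  have hD2 : DifferentiableAt ℝ (fderiv ℝ f) z :=
    (hf2.fderiv_right le_rfl).differentiableAt one_ne_zero
  have hsymm : IsSymmSndFDerivAt ℝ f z :=
    hf2.isSymmSndFDerivAt (by simp [minSmoothness_of_isRCLikeNormedField])
  have hν : HasFDerivAt ν ((I * ν z) • ofRealCLM.comp (fderiv ℝ θ z)) z := by
    rw [funext hνdef]
    exact hasFDerivAt_cexp_I_mul_ofReal
      ((hθ.contDiffAt (hU.mem_nhds hz)).differentiableAt one_ne_zero).hasFDerivAt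
  have hnorm : ‖ν z‖ = 1 := by rw [hνdef, norm_exp_I_mul_ofReal]
  simp only [dN_eq_fderiv, dS_eq_fderiv]
  rw [four_mul_wirtingerD_wirtingerDBar hD2 hsymm, fderiv_fderiv_apply_along hD2 hν,
    fderiv_fderiv_apply_along hD2 (hν.const_mul I),
    ← apply_add_apply_I_mul_of_norm_eq_one _ (hsymm 1 I) hnorm]
  simp only [hn, smul_apply, ContinuousLinearMap.comp_apply, ofRealCLM_apply,
    mul_zero, map_zero, add_zero, smul_eq_mul]
  set κ := fderiv ℝ θ z (I * ν z)
  have hrot : I * (I * ν z * κ) = (-κ) • ν z := by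
    rw [real_smul]
    push_cast
    linear_combination (ν z * κ) * I_sq
  rw [hrot, map_smul, real_smul]
  push_cast
  ring
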